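/- arXiv:2301.00074 — 2 statements merged into one kernel-verified Lean document; each statement's English description precedes it below -/
import Mathlib

section
/- Let P be a puzzle of width k, let e ∈ {1,2,3}, and let P' be the puzzle of width k+1 obtained from P by appending to every row of P a new column whose entry is e in every row. Then P is a strong uniquely solvable puzzle if and only if P' is a strong uniquely solvable puzzle. -/
/-- Exactly two of the three propositions hold. -/
def ExactlyTwo (A B C : Prop) : Prop :=
  (A ∧ B ∧ ¬C) ∨ (A ∧ ¬B ∧ C) ∨ (¬A ∧ B ∧ C)

/-- At least two of the three propositions hold. -/
def AtLeastTwo (A B C : Prop) : Prop :=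
  (A ∧ B) ∨ (A ∧ C) ∨ (B ∧ C)

/-- A puzzle of width `k` is a finite set of rows in `{1,2,3}^k`; we use the
alphabet `Fin 3` whose three elements are denoted `1`, `2`, `3` (`3 = 0`).
`P` is a strong uniquely solvable puzzle (strong USP). -/
def IsSUSP {k : ℕ} (P : Finset (Fin k → Fin 3)) : Prop :=
  ∀ π₁ π₂ π₃ : Equiv.Perm {r // r ∈ P},
    (π₁ = π₂ ∧ π₂ = π₃) ∨
    ∃ (r : {r // r ∈ P}) (c : Fin k),
      ExactlyTwo ((π₁ r).1 c = 1) ((π₂ r).1 c = 2) ((π₃ r).1 c = 3)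

/-! A constant column never witnesses `ExactlyTwo`, since a single entry `e` equals at most one
of `1`, `2`, `3`. Hence appending one changes no witness, and reindexing the rows of `P` along
the bijection `P ≃ P'` carries the permutation triples of `P` to those of `P'`. -/

def IsSUSPFamily {ι : Type*} {k : ℕ} (row : ι → Fin k → Fin 3) : Prop :=
  ∀ π₁ π₂ π₃ : Equiv.Perm ι,
    (π₁ = π₂ ∧ π₂ = π₃) ∨
    ∃ (r : ι) (c : Fin k), ExactlyTwo (row (π₁ r) c = 1) (row (π₂ r) c = 2) (row (π₃ r) c = 3)

theorem isSUSP_iff_isSUSPFamily_val {k : ℕ} (P : Finset (Fin k → Fin 3)) :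
    IsSUSP P ↔ IsSUSPFamily (Subtype.val : {r // r ∈ P} → Fin k → Fin 3) :=
  Iff.rfl

theorem not_exactlyTwo_eq_one_eq_two_eq_three (e : Fin 3) :
    ¬ExactlyTwo (e = 1) (e = 2) (e = 3) := by
  unfold ExactlyTwo
  revert e
  decide

namespace IsSUSPFamily

variable {ι κ : Type*} {k : ℕ}

theorem comp_equiv {row : κ → Fin k → Fin 3} (h : IsSUSPFamily row) (ε : ι ≃ κ) :
    IsSUSPFamily (row ∘ ε) := by
  intro π₁ π₂ π₃
  obtain ⟨h₁₂, h₂₃⟩ | ⟨r, c, hc⟩ := h (ε.permCongr π₁) (ε.permCongr π₂) (ε.permCongr π₃)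
  · exact Or.inl ⟨ε.permCongr.injective h₁₂, ε.permCongr.injective h₂₃⟩
  · exact Or.inr ⟨ε.symm r, c, hc⟩

theorem comp_equiv_iff (row : κ → Fin k → Fin 3) (ε : ι ≃ κ) :
    IsSUSPFamily (row ∘ ε) ↔ IsSUSPFamily row := by
  refine ⟨fun h => ?_, fun h => h.comp_equiv ε⟩
  simpa [Function.comp_def] using h.comp_equiv ε.symm

theorem snoc_iff (row : ι → Fin k → Fin 3) (e : Fin 3) :
    IsSUSPFamily (fun i => Fin.snoc (row i) e) ↔ IsSUSPFamily row := by
  refine forall₃_congr fun π₁ π₂ π₃ => or_congr_right (exists_congr fun r => ?_)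
  simp only [Fin.exists_fin_succ', Fin.snoc_castSucc, Fin.snoc_last,
    not_exactlyTwo_eq_one_eq_two_eq_three, or_false]

end IsSUSPFamily

theorem susp_constant_column_general {k : ℕ} (P : Finset (Fin k → Fin 3))
    (e : Fin 3) :
    IsSUSP P ↔ IsSUSP (P.image (fun r => Fin.snoc r e)) := by
  let appendColumn : (Fin k → Fin 3) ↪ (Fin (k + 1) → Fin 3) :=
    ⟨(Fin.snoc · e), Fin.snoc_left_injective (α := fun _ => Fin 3) e⟩
  have hP' : P.image (fun r => Fin.snoc r e) = P.map appendColumn := by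
    ext; simp [appendColumn]
  rw [hP', isSUSP_iff_isSUSPFamily_val, isSUSP_iff_isSUSPFamily_val,
    ← IsSUSPFamily.comp_equiv_iff _ (P.equivMap appendColumn)]
  exact (IsSUSPFamily.snoc_iff _ e).symm

/-- Adding (or removing) a constant column preserves the strong-USP
property: `P` is a strong USP iff the puzzle obtained by appending to every
row a new column with the constant entry `e ∈ {1,2,3}` is a strong USP. -/
theorem susp_constant_column {k : ℕ} (P : Finset (Fin k → Fin 3))
    (e : Fin 3) (he : e = 1 ∨ e = 2 ∨ e = 3) :
    IsSUSP P ↔ IsSUSP (P.image (fun r => Fin.snoc r e)) :=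
  susp_constant_column_general P e
end

section
/- The family of strong uniquely solvable puzzles does not satisfy the matroid augmentation property: there exist a width k and strong uniquely solvable puzzles P1, P2 of width k with |P1| < |P2| such that for every row r ∈ P2 \ P1, the puzzle P1 ∪ {r} is not a strong uniquely solvable puzzle. In particular this is witnessed with k = 2 by P1 = {(3,2)} and P2 = {(1,2), (2,3)}. -/
/-!
Let `σ` swap two distinct rows `u`, `v` of a puzzle and let `s` be a symbol. The triple of
permutations that is `σ` in coordinate `s` and the identity in the other two is distinguished
(some row and column meet exactly two of the three conditions) exactly at a row `r` and column `c`
with `(σ r) c = s ≠ r c`, so it is not distinguished iff `u` and `v` carry `s` in the same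
columns. Up to a common right factor, every nontrivial triple of permutations of a two-row puzzle
has this form; hence a two-row puzzle is a strong USP iff its rows differ in the positions of every
symbol. Now `32` and `12` both have their `2` in the second column, `32` and `23` both have no `1`,
while `12` and `23` differ in the positions of each symbol.
-/

namespace Equiv.Perm

theorem eq_one_or_eq_swap_of_forall_eq_or_eq {α : Type*} [DecidableEq α] {a b : α}
    (hab : ∀ x, x = a ∨ x = b) (π : Perm α) : π = 1 ∨ π = swap a b := by
  rcases eq_or_ne a b with rfl | hne
  · have : Subsingleton α :=
      ⟨fun x y => ((hab x).elim id id).trans ((hab y).elim id id).symm⟩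
    exact Or.inl (Subsingleton.elim _ _)
  rcases hab (π a) with ha | ha
  · have hb : π b = b :=
      (hab (π b)).resolve_left fun h => hne (π.injective (ha.trans h.symm))
    left; ext x; rcases hab x with rfl | rfl <;> simp [ha, hb]
  · have hb : π b = a :=
      (hab (π b)).resolve_right fun h => hne (π.injective (ha.trans h.symm))
    right; ext x; rcases hab x with rfl | rfl <;> simp [ha, hb]

end Equiv.Perm

open Equiv

section

variable {k : ℕ} {P : Finset (Fin k → Fin 3)}

theorem isSUSP_singleton (r : Fin k → Fin 3) : IsSUSP {r} :=
  fun _ _ _ => .inl ⟨Subsingleton.elim _ _, Subsingleton.elim _ _⟩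

def Distinguishes (π : Fin 3 → Perm {r // r ∈ P}) : Prop :=
  ∃ (r : {r // r ∈ P}) (c : Fin k),
    ExactlyTwo ((π 1 r).1 c = 1) ((π 2 r).1 c = 2) ((π 3 r).1 c = 3)

theorem isSUSP_iff_forall_distinguishes :
    IsSUSP P ↔
      ∀ π : Fin 3 → Perm {r // r ∈ P}, (∀ i j, π i = π j) ∨ Distinguishes π := by
  constructor
  · intro h π
    refine (h (π 1) (π 2) (π 3)).imp (fun ⟨h₁₂, h₂₃⟩ i j => ?_) id
    fin_cases i <;> fin_cases j <;> simp_all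
  · intro h π₁ π₂ π₃
    -- the symbol `3` is `0 : Fin 3`, the first entry of a vector
    exact (h ![π₃, π₁, π₂]).imp (fun h => ⟨h 1 2, h 2 3⟩) id

theorem distinguishes_mul_right (π : Fin 3 → Perm {r // r ∈ P}) (τ : Perm {r // r ∈ P}) :
    Distinguishes (fun i => π i * τ) ↔ Distinguishes π := by
  constructor
  · exact fun ⟨r, h⟩ => ⟨τ r, h⟩
  · exact fun ⟨r, h⟩ => ⟨τ.symm r, by simpa using h⟩

theorem exactlyTwo_update_const_iff (s x y : Fin 3) :
    ExactlyTwo (Function.update (Function.const _ x) s y 1 = 1)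
      (Function.update (Function.const _ x) s y 2 = 2)
      (Function.update (Function.const _ x) s y 3 = 3) ↔ y = s ∧ x ≠ s := by
  -- the two conditions away from `s` test the same `x` against different symbols
  unfold ExactlyTwo
  revert s x y
  decide

theorem distinguishes_mulSingle_iff (s : Fin 3) (σ : Perm {r // r ∈ P}) :
    Distinguishes (Pi.mulSingle s σ) ↔
      ∃ (r : {r // r ∈ P}) (c : Fin k), (σ r).1 c = s ∧ r.1 c ≠ s := by
  have hval : ∀ i r c, ((Pi.mulSingle s σ : Fin 3 → Perm {r // r ∈ P}) i r).1 c =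
      Function.update (Function.const _ (r.1 c)) s ((σ r).1 c) i := by
    intro i r c
    rcases eq_or_ne i s with rfl | hi <;> simp [*]
  simp only [Distinguishes, hval, exactlyTwo_update_const_iff]

theorem IsSUSP.exists_not_eq_iff_eq (hP : IsSUSP P) {u v : Fin k → Fin 3} (hu : u ∈ P)
    (hv : v ∈ P) (huv : u ≠ v) (s : Fin 3) : ∃ c, ¬(u c = s ↔ v c = s) := by
  by_contra! h
  set σ := swap (⟨u, hu⟩ : {r // r ∈ P}) ⟨v, hv⟩
  have hσ : σ ≠ 1 := by simp [σ, swap_eq_one_iff, huv]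
  have hσs : ∀ r c, (σ r).1 c = s ↔ r.1 c = s := by
    intro r c
    rcases eq_or_ne r ⟨u, hu⟩ with rfl | hru
    · simp [σ, h]
    rcases eq_or_ne r ⟨v, hv⟩ with rfl | hrv
    · simp [σ, h]
    · simp [σ, swap_apply_of_ne_of_ne hru hrv]
  rcases isSUSP_iff_forall_distinguishes.1 hP (Pi.mulSingle s σ) with hall | hd
  · have hs : s + 1 ≠ s := by simp
    exact hσ (by simpa [hs] using hall s (s + 1))
  · obtain ⟨r, c, hr, hrs⟩ := (distinguishes_mulSingle_iff s σ).1 hd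
    exact hrs ((hσs r c).1 hr)

theorem isSUSP_pair_iff {u v : Fin k → Fin 3} (huv : u ≠ v) :
    IsSUSP {u, v} ↔ ∀ s : Fin 3, ∃ c, ¬(u c = s ↔ v c = s) := by
  refine ⟨fun hP => hP.exists_not_eq_iff_eq (by simp) (by simp) huv, fun h => ?_⟩
  set a : {r // r ∈ ({u, v} : Finset (Fin k → Fin 3))} := ⟨u, by simp⟩
  set b : {r // r ∈ ({u, v} : Finset (Fin k → Fin 3))} := ⟨v, by simp⟩
  set σ := swap a b
  have hab : ∀ x, x = a ∨ x = b := by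
    rintro ⟨x, hx⟩
    rcases Finset.mem_insert.1 hx with rfl | hx
    · exact .inl rfl
    · exact .inr (Subtype.ext (Finset.mem_singleton.1 hx))
  rw [isSUSP_iff_forall_distinguishes]
  intro π
  have hdist : ∀ s τ, (∀ i, π i = (Pi.mulSingle s σ : Fin 3 → Perm _) i * τ) →
      Distinguishes π := by
    intro s τ hπ
    rw [funext hπ, distinguishes_mul_right, distinguishes_mulSingle_iff]
    obtain ⟨c, hc⟩ := h s
    by_cases hus : u c = s
    · exact ⟨b, c, by simpa [σ, a] using hus, fun hvs => hc (iff_of_true hus hvs)⟩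
    · exact ⟨a, c, by simpa [σ, b, hus] using hc, hus⟩
  have hπ : ∀ i, π i = 1 ∨ π i = σ :=
    fun i => (π i).eq_one_or_eq_swap_of_forall_eq_or_eq hab
  have hσσ : σ * σ = 1 := swap_mul_self a b
  rcases hπ 1 with h1 | h1 <;> rcases hπ 2 with h2 | h2 <;> rcases hπ 3 with h3 | h3
  · exact .inl fun i j => by fin_cases i <;> fin_cases j <;> simp_all
  · exact .inr (hdist 3 1 fun i => by fin_cases i <;> simp_all)
  · exact .inr (hdist 2 1 fun i => by fin_cases i <;> simp_all)
  · exact .inr (hdist 1 σ fun i => by fin_cases i <;> simp_all)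
  · exact .inr (hdist 1 1 fun i => by fin_cases i <;> simp_all)
  · exact .inr (hdist 2 σ fun i => by fin_cases i <;> simp_all)
  · exact .inr (hdist 3 σ fun i => by fin_cases i <;> simp_all)
  · exact .inl fun i j => by fin_cases i <;> fin_cases j <;> simp_all

end

/-- Strong USPs do not satisfy the matroid augmentation property: there are
strong USPs `P₁, P₂` of a common width with `|P₁| < |P₂|` such that `P₁`
cannot be augmented by any row of `P₂ \ P₁`.  In particular this is witnessed
at width `k = 2` by `P₁ = {32}` and `P₂ = {12, 23}`. -/
theorem susp_not_matroid :
    (∃ (k : ℕ) (P₁ P₂ : Finset (Fin k → Fin 3)),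
      IsSUSP P₁ ∧ IsSUSP P₂ ∧ P₁.card < P₂.card ∧
      ∀ r ∈ P₂ \ P₁, ¬ IsSUSP (insert r P₁)) ∧
    (IsSUSP ({![3, 2]} : Finset (Fin 2 → Fin 3)) ∧
      IsSUSP ({![1, 2], ![2, 3]} : Finset (Fin 2 → Fin 3)) ∧
      ({![3, 2]} : Finset (Fin 2 → Fin 3)).card <
        ({![1, 2], ![2, 3]} : Finset (Fin 2 → Fin 3)).card ∧
      ∀ r ∈ ({![1, 2], ![2, 3]} : Finset (Fin 2 → Fin 3)) \
            ({![3, 2]} : Finset (Fin 2 → Fin 3)),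
        ¬ IsSUSP (insert r ({![3, 2]} : Finset (Fin 2 → Fin 3)))) := by
  have hP₁ : IsSUSP ({![3, 2]} : Finset (Fin 2 → Fin 3)) := isSUSP_singleton _
  have hP₂ : IsSUSP ({![1, 2], ![2, 3]} : Finset (Fin 2 → Fin 3)) :=
    (isSUSP_pair_iff (by decide)).2 (by decide)
  have hcard : ({![3, 2]} : Finset (Fin 2 → Fin 3)).card <
      ({![1, 2], ![2, 3]} : Finset (Fin 2 → Fin 3)).card := by decide
  have hnot : ∀ r ∈ ({![1, 2], ![2, 3]} : Finset (Fin 2 → Fin 3)) \ {![3, 2]},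
      ¬ IsSUSP (insert r ({![3, 2]} : Finset (Fin 2 → Fin 3))) := by
    intro r hr hP
    obtain rfl | rfl : r = ![1, 2] ∨ r = ![2, 3] := by simpa using (Finset.mem_sdiff.1 hr).1
    · exact absurd (hP.exists_not_eq_iff_eq (u := ![1, 2]) (v := ![3, 2])
        (by simp) (by simp) (by decide) 2) (by decide)
    · exact absurd (hP.exists_not_eq_iff_eq (u := ![2, 3]) (v := ![3, 2])
        (by simp) (by simp) (by decide) 1) (by decide)
  exact ⟨⟨2, _, _, hP₁, hP₂, hcard, hnot⟩, hP₁, hP₂, hcard, hnot⟩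
end
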